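/- arXiv:1409.1352 — 3 statements merged into one kernel-verified Lean document; each statement's English description precedes it below -/
import Mathlib

section
/- Let a, b ≥ 1 and c > 0 with a > bc. Suppose d is a positive integer, Λ' = e_{1,0}^d or Λ' = e_{0,1}^d (a single horizontal, respectively vertical, edge of multiplicity d labeled 'e'), and Λ is a convex generator with Λ ≤_{P(a,1),P(bc,c)} Λ'. Then d = 1 and Λ = e_{1,0}. -/
open Real Set

noncomputable section

/-! ### Symplectic embeddings of subsets of ℝ⁴ ≅ ℂ² -/

/-- ℝ⁴ with coordinates `(x₁, y₁, x₂, y₂)`, identified with ℂ² via `z_j = x_j + i y_j`. -/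
abbrev R4 : Type := ℝ × ℝ × ℝ × ℝ

/-- The standard symplectic form `ω = dx₁∧dy₁ + dx₂∧dy₂` on ℝ⁴, as a bilinear pairing. -/
def omegaStd (v w : R4) : ℝ :=
  v.1 * w.2.1 - v.2.1 * w.1 + v.2.2.1 * w.2.2.2 - v.2.2.2 * w.2.2.1

/-- `X` symplectically embeds into `X'`: there is an injective smooth map `φ` defined on an
open neighborhood `U` of `X` with `φ(X) ⊆ X'`, whose derivative at every point preserves
the standard symplectic form. -/
def SymplecticEmbeds (X X' : Set R4) : Prop :=
  ∃ (U : Set R4) (φ : R4 → R4),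
    IsOpen U ∧ X ⊆ U ∧ ContDiffOn ℝ (⊤ : ℕ∞) φ U ∧ Set.InjOn φ U ∧ φ '' X ⊆ X' ∧
    ∀ p ∈ U, ∀ v w : R4,
      omegaStd (fderiv ℝ φ p v) (fderiv ℝ φ p w) = omegaStd v w

/-- The polydisk `P(a,b) = {z : π|z₁|² ≤ a, π|z₂|² ≤ b}`. -/
def polydisk (a b : ℝ) : Set R4 :=
  {z | π * (z.1 ^ 2 + z.2.1 ^ 2) ≤ a ∧ π * (z.2.2.1 ^ 2 + z.2.2.2 ^ 2) ≤ b}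

/-- The ellipsoid `E(a,b) = {z : π|z₁|²/a + π|z₂|²/b ≤ 1}`. -/
def ellipsoid (a b : ℝ) : Set R4 :=
  {z | π * (z.1 ^ 2 + z.2.1 ^ 2) / a + π * (z.2.2.1 ^ 2 + z.2.2.2 ^ 2) / b ≤ 1}

/-- The ball `B(c) = E(c,c)`. -/
def ball4 (c : ℝ) : Set R4 := ellipsoid c c

/-! ### Convex generators -/

/-- A convex generator, encoded as a commutative formal product of symbols `e_{a,b}` and
`h_{a,b}` over coprime pairs `(a,b)` of nonnegative integers.  `mult (a,b)` is the total
exponent of the direction `(a,b)`, so the corresponding edge of the underlying convex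
integral path has displacement vector `(mult (a,b) • a, - mult (a,b) • b)`, and
`hLabel (a,b) = true` iff the factor `h_{a,b}` occurs, i.e. iff this edge is labeled `h`.
No factor `h_{a,b}` may be repeated, and `h_{1,0}`, `h_{0,1}` may not occur (horizontal
and vertical edges can only be labeled `e`). -/
structure ConvexGenerator where
  mult : ℕ × ℕ → ℕ
  hLabel : ℕ × ℕ → Bool
  coprime_of_mem : ∀ d, mult d ≠ 0 → Nat.Coprime d.1 d.2
  finite_support : {d : ℕ × ℕ | mult d ≠ 0}.Finite
  mult_pos_of_h : ∀ d, hLabel d = true → mult d ≠ 0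
  h_ne_horiz : hLabel (1, 0) = false
  h_ne_vert : hLabel (0, 1) = false

namespace ConvexGenerator

/-- `x(Λ)`, the horizontal coordinate of the right endpoint of the path. -/
def xCoord (Λ : ConvexGenerator) : ℕ := ∑ᶠ d : ℕ × ℕ, Λ.mult d * d.1

/-- `y(Λ)`, the vertical coordinate of the left endpoint of the path. -/
def yCoord (Λ : ConvexGenerator) : ℕ := ∑ᶠ d : ℕ × ℕ, Λ.mult d * d.2

/-- `m(Λ)`, the number of lattice points on the path minus one (the total multiplicity). -/
def mTotal (Λ : ConvexGenerator) : ℕ := ∑ᶠ d : ℕ × ℕ, Λ.mult d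

/-- `h(Λ)`, the number of edges labeled `h`. -/
def hCount (Λ : ConvexGenerator) : ℕ := {d : ℕ × ℕ | Λ.hLabel d = true}.ncard

/-- The maximum of the linear functional `(p,q) ↦ b' p + a' q` over the path `Λ`:
the path starts at `(0, y(Λ))` and the maximum of the functional over the concave path
is obtained by adding all positive increments `m (b' a - a' b)` of its edges
(truncated subtraction implements the positive part). -/
def suppFn (Λ : ConvexGenerator) (a' b' : ℕ) : ℕ :=
  a' * Λ.yCoord + ∑ᶠ d : ℕ × ℕ, Λ.mult d * (b' * d.1 - a' * d.2)

/-- The set of lattice points in the closed region enclosed by the path `Λ` and the two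
coordinate axes (including lattice points on the boundary). -/
def latticeRegion (Λ : ConvexGenerator) : Set (ℕ × ℕ) :=
  {p | ∀ a' b' : ℕ, b' * p.1 + a' * p.2 ≤ Λ.suppFn a' b'}

/-- `L(Λ)`, the number of lattice points enclosed by `Λ` and the axes (boundary included). -/
def LCount (Λ : ConvexGenerator) : ℕ := Λ.latticeRegion.ncard

/-- The ECH index `I(Λ) = 2(L(Λ) - 1) - h(Λ)`. -/
def iIndex (Λ : ConvexGenerator) : ℤ := 2 * ((Λ.LCount : ℤ) - 1) - (Λ.hCount : ℤ)

/-- All edges of `Λ` are labeled `e`. -/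
def allE (Λ : ConvexGenerator) : Prop := ∀ d : ℕ × ℕ, Λ.hLabel d = false

/-- The exponent of the factor `e_{a,b}` in the formal product `Λ`. -/
def eExp (Λ : ConvexGenerator) (d : ℕ × ℕ) : ℕ :=
  Λ.mult d - (if Λ.hLabel d = true then 1 else 0)

/-- The symplectic action `A_Ω(Λ) = Σ_ν max_{p ∈ Ω} (ν⃗ × p)`: the edge in direction
`(a,b)` with multiplicity `m` has `ν⃗ = (m a, -m b)`, and `ν⃗ × p = m (b p₁ + a p₂)`. -/
def action (Λ : ConvexGenerator) (Ω : Set (ℝ × ℝ)) : ℝ :=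
  ∑ᶠ d : ℕ × ℕ, (Λ.mult d : ℝ) *
    sSup ((fun p : ℝ × ℝ => (d.2 : ℝ) * p.1 + (d.1 : ℝ) * p.2) '' Ω)

end ConvexGenerator

/-- `Λ₁` and `Λ₂` have no elliptic orbit in common: no factor `e_{a,b}` appears in both. -/
def NoCommonElliptic (Λ₁ Λ₂ : ConvexGenerator) : Prop :=
  ∀ d : ℕ × ℕ, Λ₁.eExp d = 0 ∨ Λ₂.eExp d = 0

/-- `Λ₁` and `Λ₂` have no hyperbolic orbit in common: no factor `h_{a,b}` appears in both. -/
def NoCommonHyperbolic (Λ₁ Λ₂ : ConvexGenerator) : Prop :=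
  ∀ d : ℕ × ℕ, ¬(Λ₁.hLabel d = true ∧ Λ₂.hLabel d = true)

/-- The generator `e_{a,b}^m`: a single edge in the coprime direction `(a,b)` with
multiplicity `m`, labeled `e`. -/
def eGen (a b : ℕ) (hab : Nat.Coprime a b) (m : ℕ) : ConvexGenerator where
  mult d := if d = (a, b) then m else 0
  hLabel _ := false
  coprime_of_mem := by
    intro d hd
    have hd' : d = (a, b) := by
      by_contra h
      simp [h] at hd
    subst hd'
    exact hab
  finite_support := by
    apply Set.Finite.subset (Set.finite_singleton (a, b))
    intro d hd
    simp only [Set.mem_setOf_eq] at hd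
    by_contra h
    simp only [Set.mem_singleton_iff] at h
    simp [h] at hd
  mult_pos_of_h := by intro d h; simp at h
  h_ne_horiz := rfl
  h_ne_vert := rfl

/-- `e_{1,0}^m`: a horizontal edge of multiplicity `m` labeled `e`. -/
def e10 (m : ℕ) : ConvexGenerator := eGen 1 0 (Nat.coprime_one_left 0) m

/-- `e_{0,1}^m`: a vertical edge of multiplicity `m` labeled `e`. -/
def e01 (m : ℕ) : ConvexGenerator := eGen 0 1 (Nat.coprime_one_right 0) m

/-- `e_{1,1}^m`: a single edge from `(0,m)` to `(m,0)` labeled `e`. -/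
def e11 (m : ℕ) : ConvexGenerator := eGen 1 1 (Nat.coprime_one_left 1) m

/-- `e_{b,1}^m`: a single edge with displacement vector `(m b, -m)` labeled `e`. -/
def eb1 (b m : ℕ) : ConvexGenerator := eGen b 1 (Nat.coprime_one_right b) m

/-- The product of two convex generators (concatenation of formal products; faithful to
the paper's product whenever the factors have no hyperbolic orbit in common). -/
def mulCG (Λ₁ Λ₂ : ConvexGenerator) : ConvexGenerator where
  mult d := Λ₁.mult d + Λ₂.mult d
  hLabel d := Λ₁.hLabel d || Λ₂.hLabel d
  coprime_of_mem := by
    intro d hd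
    have hd' : Λ₁.mult d + Λ₂.mult d ≠ 0 := hd
    rcases Nat.eq_zero_or_pos (Λ₁.mult d) with h1 | h1
    · exact Λ₂.coprime_of_mem d (by omega)
    · exact Λ₁.coprime_of_mem d (by omega)
  finite_support := by
    apply Set.Finite.subset (Λ₁.finite_support.union Λ₂.finite_support)
    intro d hd
    simp only [Set.mem_setOf_eq] at hd
    simp only [Set.mem_union, Set.mem_setOf_eq]
    omega
  mult_pos_of_h := by
    intro d h
    show Λ₁.mult d + Λ₂.mult d ≠ 0
    rcases Bool.or_eq_true_iff.mp h with h' | h'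
    · have := Λ₁.mult_pos_of_h d h'; omega
    · have := Λ₂.mult_pos_of_h d h'; omega
  h_ne_horiz := by rw [Bool.or_eq_false_iff]; exact ⟨Λ₁.h_ne_horiz, Λ₂.h_ne_horiz⟩
  h_ne_vert := by rw [Bool.or_eq_false_iff]; exact ⟨Λ₁.h_ne_vert, Λ₂.h_ne_vert⟩

/-- The product `∏_{i ∈ S} Λᵢ` of a family of convex generators (faithful to the paper's
product whenever the factors pairwise have no hyperbolic orbit in common). -/
def finProd {n : ℕ} (S : Finset (Fin n)) (Λs : Fin n → ConvexGenerator) : ConvexGenerator where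
  mult d := ∑ i ∈ S, (Λs i).mult d
  hLabel d := decide (∃ i ∈ S, (Λs i).hLabel d = true)
  coprime_of_mem := by
    intro d hd
    have : ∃ i ∈ S, (Λs i).mult d ≠ 0 := by
      by_contra hcon
      push_neg at hcon
      exact hd (Finset.sum_eq_zero hcon)
    obtain ⟨i, _, hi⟩ := this
    exact (Λs i).coprime_of_mem d hi
  finite_support := by
    apply Set.Finite.subset
      (Set.Finite.biUnion S.finite_toSet fun i _ => (Λs i).finite_support)
    intro d hd
    simp only [Set.mem_setOf_eq] at hd
    have : ∃ i ∈ S, (Λs i).mult d ≠ 0 := by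
      by_contra hcon
      push_neg at hcon
      exact hd (Finset.sum_eq_zero hcon)
    obtain ⟨i, hiS, hi⟩ := this
    exact Set.mem_biUnion hiS hi
  mult_pos_of_h := by
    intro d h
    obtain ⟨i, hiS, hi⟩ := of_decide_eq_true h
    intro hsum
    rw [Finset.sum_eq_zero_iff] at hsum
    exact (Λs i).mult_pos_of_h d hi (hsum i hiS)
  h_ne_horiz := by
    rw [decide_eq_false_iff_not]
    rintro ⟨i, -, hi⟩
    rw [(Λs i).h_ne_horiz] at hi
    exact Bool.false_ne_true hi
  h_ne_vert := by
    rw [decide_eq_false_iff_not]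
    rintro ⟨i, -, hi⟩
    rw [(Λs i).h_ne_vert] at hi
    exact Bool.false_ne_true hi

/-! ### Convex toric domains -/

/-- The moment-map region `Ω` of a convex toric domain:
`Ω = {(x,y) : 0 ≤ x ≤ A, 0 ≤ y ≤ f(x)}` with `f : [0,A] → ℝ≥0` nonincreasing concave. -/
structure ConvexToricDomain where
  A : ℝ
  A_pos : 0 < A
  f : ℝ → ℝ
  f_nonneg : ∀ x ∈ Set.Icc (0 : ℝ) A, 0 ≤ f x
  f_anti : AntitoneOn f (Set.Icc (0 : ℝ) A)
  f_concave : ConcaveOn ℝ (Set.Icc (0 : ℝ) A) f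

namespace ConvexToricDomain

/-- The region `Ω ⊆ ℝ²`. -/
def Omega (D : ConvexToricDomain) : Set (ℝ × ℝ) :=
  {p | 0 ≤ p.1 ∧ p.1 ≤ D.A ∧ 0 ≤ p.2 ∧ p.2 ≤ D.f p.1}

/-- The toric domain `X_Ω = {z ∈ ℂ² : (π|z₁|², π|z₂|²) ∈ Ω}` as a subset of ℝ⁴. -/
def toDomain (D : ConvexToricDomain) : Set R4 :=
  {z | (π * (z.1 ^ 2 + z.2.1 ^ 2), π * (z.2.2.1 ^ 2 + z.2.2.2 ^ 2)) ∈ D.Omega}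

end ConvexToricDomain

/-- The moment region of the polydisk `P(a,b)`: the rectangle `[0,a] × [0,b]`. -/
def rectOmega (a b : ℝ) : Set (ℝ × ℝ) :=
  {p | 0 ≤ p.1 ∧ p.1 ≤ a ∧ 0 ≤ p.2 ∧ p.2 ≤ b}

/-- The moment region of the ellipsoid `E(a,b)`: the triangle with vertices
`(0,0)`, `(a,0)`, `(0,b)`. -/
def triOmega (a b : ℝ) : Set (ℝ × ℝ) :=
  {p | 0 ≤ p.1 ∧ 0 ≤ p.2 ∧ p.1 / a + p.2 / b ≤ 1}

/-- `Λ ≤_{Ω,Ω'} Λ'` (Definition 1.16 of the paper, for `Λ'` with all edges `e`):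
(i) equal ECH indices, (ii) `A_Ω(Λ) ≤ A_{Ω'}(Λ')`, and
(iii) `x(Λ) + y(Λ) - h(Λ)/2 ≥ x(Λ') + y(Λ') + m(Λ') - 1`. -/
def genLE (Ω Ω' : Set (ℝ × ℝ)) (Λ Λ' : ConvexGenerator) : Prop :=
  Λ.iIndex = Λ'.iIndex ∧
  Λ.action Ω ≤ Λ'.action Ω' ∧
  ((Λ'.xCoord : ℝ) + (Λ'.yCoord : ℝ) + (Λ'.mTotal : ℝ) - 1 ≤
    (Λ.xCoord : ℝ) + (Λ.yCoord : ℝ) - (Λ.hCount : ℝ) / 2)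

/-- `Λ` is minimal for the convex toric domain with moment region `Ω`: all edges of `Λ`
are labeled `e`, and `Λ` uniquely minimizes the action among convex generators with the
same ECH index and all edges labeled `e`. -/
def IsMinimal (Ω : Set (ℝ × ℝ)) (Λ : ConvexGenerator) : Prop :=
  Λ.allE ∧ ∀ Λ' : ConvexGenerator, Λ'.allE → Λ'.iIndex = Λ.iIndex → Λ' ≠ Λ →
    Λ.action Ω < Λ'.action Ω

end


/-! ### Auxiliary lemmas for Step 1 -/

section Step1Aux

open ConvexGenerator

namespace ConvexGenerator

/-- The support of `mult` as a `Finset`. -/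
noncomputable def supp (Λ : ConvexGenerator) : Finset (ℕ × ℕ) :=
  Λ.finite_support.toFinset

lemma mem_supp {Λ : ConvexGenerator} {d : ℕ × ℕ} : d ∈ Λ.supp ↔ Λ.mult d ≠ 0 :=
  Set.Finite.mem_toFinset _

lemma finsum_mult (Λ : ConvexGenerator) (g : ℕ × ℕ → ℕ) :
    ∑ᶠ d, Λ.mult d * g d = ∑ d ∈ Λ.supp, Λ.mult d * g d := by
  apply finsum_eq_sum_of_support_subset
  intro d hd
  rw [Function.mem_support] at hd
  simp only [Finset.mem_coe, mem_supp]
  intro h; rw [h, zero_mul] at hd; exact hd rfl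

lemma xCoord_eq (Λ : ConvexGenerator) : Λ.xCoord = ∑ d ∈ Λ.supp, Λ.mult d * d.1 :=
  Λ.finsum_mult _

lemma yCoord_eq (Λ : ConvexGenerator) : Λ.yCoord = ∑ d ∈ Λ.supp, Λ.mult d * d.2 :=
  Λ.finsum_mult _

lemma suppFn_eq (Λ : ConvexGenerator) (a' b' : ℕ) :
    Λ.suppFn a' b' = a' * Λ.yCoord + ∑ d ∈ Λ.supp, Λ.mult d * (b' * d.1 - a' * d.2) := by
  rw [suppFn, Λ.finsum_mult _]

lemma le_suppFn_x (Λ : ConvexGenerator) (a' b' : ℕ) : b' * Λ.xCoord ≤ Λ.suppFn a' b' := by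
  rw [suppFn_eq, xCoord_eq, Finset.mul_sum]
  have key : ∀ d ∈ Λ.supp, b' * (Λ.mult d * d.1) ≤
      Λ.mult d * (b' * d.1 - a' * d.2) + a' * (Λ.mult d * d.2) := by
    intro d _
    have h1 : b' * d.1 ≤ (b' * d.1 - a' * d.2) + a' * d.2 := by omega
    calc b' * (Λ.mult d * d.1) = Λ.mult d * (b' * d.1) := by ring
    _ ≤ Λ.mult d * ((b' * d.1 - a' * d.2) + a' * d.2) := Nat.mul_le_mul_left _ h1
    _ = Λ.mult d * (b' * d.1 - a' * d.2) + a' * (Λ.mult d * d.2) := by ring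
  calc ∑ d ∈ Λ.supp, b' * (Λ.mult d * d.1)
      ≤ ∑ d ∈ Λ.supp, (Λ.mult d * (b' * d.1 - a' * d.2) + a' * (Λ.mult d * d.2)) :=
        Finset.sum_le_sum key
    _ = ∑ d ∈ Λ.supp, Λ.mult d * (b' * d.1 - a' * d.2)
        + a' * ∑ d ∈ Λ.supp, Λ.mult d * d.2 := by
        rw [Finset.sum_add_distrib, Finset.mul_sum]
    _ ≤ a' * Λ.yCoord + ∑ d ∈ Λ.supp, Λ.mult d * (b' * d.1 - a' * d.2) := by
        rw [yCoord_eq]; omega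

lemma le_suppFn_y (Λ : ConvexGenerator) (a' b' : ℕ) : a' * Λ.yCoord ≤ Λ.suppFn a' b' := by
  rw [suppFn_eq]; exact Nat.le_add_right _ _

lemma mem_region_fst {Λ : ConvexGenerator} {p : ℕ × ℕ} (hp : p ∈ Λ.latticeRegion) :
    p.1 ≤ Λ.xCoord := by
  have := hp 0 1
  have h2 : Λ.suppFn 0 1 = Λ.xCoord := by
    rw [suppFn_eq, xCoord_eq]; simp
  omega

lemma mem_region_snd {Λ : ConvexGenerator} {p : ℕ × ℕ} (hp : p ∈ Λ.latticeRegion) :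
    p.2 ≤ Λ.yCoord := by
  have := hp 1 0
  have h2 : Λ.suppFn 1 0 = Λ.yCoord := by
    rw [suppFn_eq, yCoord_eq]; simp
  omega

lemma latticeRegion_finite (Λ : ConvexGenerator) : Λ.latticeRegion.Finite := by
  apply Set.Finite.subset (Set.finite_Icc (0, 0) (Λ.xCoord, Λ.yCoord))
  intro p hp
  simp only [Set.mem_Icc, Prod.le_def]
  exact ⟨⟨Nat.zero_le _, Nat.zero_le _⟩, mem_region_fst hp, mem_region_snd hp⟩

/-- The axis lattice points, as a finset of cardinality `x + y + 1`. -/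
noncomputable def axisPts (Λ : ConvexGenerator) : Finset (ℕ × ℕ) :=
  (Finset.range (Λ.xCoord + 1)).image (fun i => (i, 0))
    ∪ (Finset.range Λ.yCoord).image (fun j => (0, j + 1))

lemma axisPts_card (Λ : ConvexGenerator) : Λ.axisPts.card = Λ.xCoord + Λ.yCoord + 1 := by
  rw [axisPts, Finset.card_union_of_disjoint, Finset.card_image_of_injective,
    Finset.card_image_of_injective, Finset.card_range, Finset.card_range]
  · omega
  · intro i j hij; simpa using hij
  · intro i j hij; simpa using hij
  · rw [Finset.disjoint_left]
    intro p hp hq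
    simp only [Finset.mem_image, Finset.mem_range] at hp hq
    obtain ⟨i, _, rfl⟩ := hp
    obtain ⟨j, _, hj⟩ := hq
    simpa using congrArg Prod.snd hj

lemma axisPts_subset (Λ : ConvexGenerator) : ↑Λ.axisPts ⊆ Λ.latticeRegion := by
  intro p hp
  simp only [axisPts, Finset.coe_union, Set.mem_union, Finset.coe_image, Set.mem_image,
    Finset.mem_coe, Finset.mem_range] at hp
  intro a' b'
  rcases hp with ⟨i, hi, rfl⟩ | ⟨j, hj, rfl⟩
  · have h1 : b' * i ≤ b' * Λ.xCoord := Nat.mul_le_mul_left _ (by omega)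
    have h2 := Λ.le_suppFn_x a' b'
    simpa using le_trans h1 h2
  · have h1 : a' * (j + 1) ≤ a' * Λ.yCoord := Nat.mul_le_mul_left _ (by omega)
    have h2 := Λ.le_suppFn_y a' b'
    simpa using le_trans h1 h2

lemma LCount_ge (Λ : ConvexGenerator) : Λ.xCoord + Λ.yCoord + 1 ≤ Λ.LCount := by
  rw [← Λ.axisPts_card, ← Set.ncard_coe_finset]
  exact Set.ncard_le_ncard Λ.axisPts_subset Λ.latticeRegion_finite

/-- The `h`-labeled directions, as a finset. -/
noncomputable def hSet (Λ : ConvexGenerator) : Finset (ℕ × ℕ) :=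
  Λ.supp.filter (fun d => Λ.hLabel d = true)

lemma hCount_eq (Λ : ConvexGenerator) : Λ.hCount = Λ.hSet.card := by
  rw [hCount, ← Set.ncard_coe_finset]
  congr 1
  ext d
  simp only [Finset.coe_filter, hSet, Set.mem_setOf_eq, mem_supp]
  exact ⟨fun h => ⟨Λ.mult_pos_of_h d h, h⟩, fun h => h.2⟩

lemma hDir_pos {Λ : ConvexGenerator} {d : ℕ × ℕ} (h : Λ.hLabel d = true) :
    1 ≤ d.1 ∧ 1 ≤ d.2 := by
  have hm := Λ.mult_pos_of_h d h
  have hcop := Λ.coprime_of_mem d hm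
  constructor
  · rcases Nat.eq_zero_or_pos d.1 with h1 | h1
    · exfalso
      have : d.2 = 1 := by
        have := hcop; rw [Nat.Coprime, h1] at this; simpa using this
      have hd : d = (0, 1) := by
        rcases d with ⟨d1, d2⟩; simp_all
      rw [hd, Λ.h_ne_vert] at h; exact Bool.false_ne_true h
    · exact h1
  · rcases Nat.eq_zero_or_pos d.2 with h1 | h1
    · exfalso
      have : d.1 = 1 := by
        have := hcop; rw [Nat.Coprime, h1] at this; simpa using this
      have hd : d = (1, 0) := by
        rcases d with ⟨d1, d2⟩; simp_all
      rw [hd, Λ.h_ne_horiz] at h; exact Bool.false_ne_true h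
    · exact h1

lemma hCount_le_xCoord (Λ : ConvexGenerator) : Λ.hCount ≤ Λ.xCoord := by
  rw [hCount_eq, xCoord_eq]
  calc Λ.hSet.card = ∑ _d ∈ Λ.hSet, 1 := by simp
  _ ≤ ∑ d ∈ Λ.hSet, Λ.mult d * d.1 := by
      apply Finset.sum_le_sum
      intro d hd
      simp only [hSet, Finset.mem_filter, mem_supp] at hd
      have := (hDir_pos hd.2).1
      have : 1 ≤ Λ.mult d := Nat.one_le_iff_ne_zero.mpr hd.1
      exact Nat.one_le_iff_ne_zero.mpr (by
        have h1 := (hDir_pos hd.2).1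
        positivity)
  _ ≤ ∑ d ∈ Λ.supp, Λ.mult d * d.1 :=
      Finset.sum_le_sum_of_subset (Finset.filter_subset _ _)

lemma hCount_le_yCoord (Λ : ConvexGenerator) : Λ.hCount ≤ Λ.yCoord := by
  rw [hCount_eq, yCoord_eq]
  calc Λ.hSet.card = ∑ _d ∈ Λ.hSet, 1 := by simp
  _ ≤ ∑ d ∈ Λ.hSet, Λ.mult d * d.2 := by
      apply Finset.sum_le_sum
      intro d hd
      simp only [hSet, Finset.mem_filter, mem_supp] at hd
      have h1 := (hDir_pos hd.2).2
      have h2 : 1 ≤ Λ.mult d := Nat.one_le_iff_ne_zero.mpr hd.1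
      exact Nat.one_le_iff_ne_zero.mpr (by positivity)
  _ ≤ ∑ d ∈ Λ.supp, Λ.mult d * d.2 :=
      Finset.sum_le_sum_of_subset (Finset.filter_subset _ _)

end ConvexGenerator

lemma sSup_rect (q1 q2 : ℕ) {A B : ℝ} (hA : 0 ≤ A) (hB : 0 ≤ B) :
    sSup ((fun p : ℝ × ℝ => (q2 : ℝ) * p.1 + (q1 : ℝ) * p.2) '' rectOmega A B)
      = q2 * A + q1 * B := by
  apply IsGreatest.csSup_eq
  constructor
  · exact ⟨(A, B), ⟨hA, le_refl A, hB, le_refl B⟩, rfl⟩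
  · rintro x ⟨p, ⟨h1, h2, h3, h4⟩, rfl⟩
    have hq1 : (0:ℝ) ≤ q1 := Nat.cast_nonneg _
    have hq2 : (0:ℝ) ≤ q2 := Nat.cast_nonneg _
    have := mul_le_mul_of_nonneg_left h2 hq2
    have := mul_le_mul_of_nonneg_left h4 hq1
    dsimp only
    linarith

lemma action_rect (Λ : ConvexGenerator) {A B : ℝ} (hA : 0 ≤ A) (hB : 0 ≤ B) :
    Λ.action (rectOmega A B) = B * Λ.xCoord + A * Λ.yCoord := by
  have h1 : Λ.action (rectOmega A B)
      = ∑ᶠ d : ℕ × ℕ, (Λ.mult d : ℝ) * ((d.2 : ℝ) * A + (d.1 : ℝ) * B) := by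
    rw [ConvexGenerator.action]
    exact finsum_congr fun d => by rw [sSup_rect d.1 d.2 hA hB]
  rw [h1]
  have h2 : ∑ᶠ d : ℕ × ℕ, (Λ.mult d : ℝ) * ((d.2 : ℝ) * A + (d.1 : ℝ) * B)
      = ∑ d ∈ Λ.supp, (Λ.mult d : ℝ) * ((d.2 : ℝ) * A + (d.1 : ℝ) * B) := by
    apply finsum_eq_sum_of_support_subset
    intro d hd
    rw [Function.mem_support] at hd
    simp only [Finset.mem_coe, ConvexGenerator.mem_supp]
    intro h; rw [h] at hd; simpa using hd
  rw [h2, ConvexGenerator.xCoord_eq, ConvexGenerator.yCoord_eq]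
  push_cast
  rw [Finset.mul_sum, Finset.mul_sum, ← Finset.sum_add_distrib]
  exact Finset.sum_congr rfl fun d _ => by ring

/-! Computations for `eGen`. -/

lemma eGen_finsum {α β : ℕ} (hab : Nat.Coprime α β) (m : ℕ) (g : ℕ × ℕ → ℕ) :
    ∑ᶠ d, (eGen α β hab m).mult d * g d = m * g (α, β) := by
  rw [finsum_eq_single _ (α, β)]
  · simp [eGen]
  · intro d hd
    simp [eGen, hd]

lemma eGen_xCoord {α β : ℕ} (hab : Nat.Coprime α β) (m : ℕ) :
    (eGen α β hab m).xCoord = m * α :=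
  eGen_finsum hab m _

lemma eGen_yCoord {α β : ℕ} (hab : Nat.Coprime α β) (m : ℕ) :
    (eGen α β hab m).yCoord = m * β :=
  eGen_finsum hab m _

lemma eGen_mTotal {α β : ℕ} (hab : Nat.Coprime α β) (m : ℕ) :
    (eGen α β hab m).mTotal = m := by
  rw [ConvexGenerator.mTotal, finsum_eq_single _ (α, β)]
  · simp [eGen]
  · intro d hd; simp [eGen, hd]

lemma eGen_hCount {α β : ℕ} (hab : Nat.Coprime α β) (m : ℕ) :
    (eGen α β hab m).hCount = 0 := by
  rw [ConvexGenerator.hCount]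
  convert Set.ncard_empty (ℕ × ℕ)
  ext d
  simp [eGen]

lemma eGen_suppFn {α β : ℕ} (hab : Nat.Coprime α β) (m a' b' : ℕ) :
    (eGen α β hab m).suppFn a' b' = a' * (m * β) + m * (b' * α - a' * β) := by
  rw [ConvexGenerator.suppFn, eGen_yCoord, finsum_eq_single _ (α, β)]
  · simp [eGen]
  · intro d hd; simp [eGen, hd]

lemma e10_region (m : ℕ) :
    (e10 m).latticeRegion = ↑((Finset.range (m + 1)).image (fun i => ((i, 0) : ℕ × ℕ))) := by
  ext p
  simp only [ConvexGenerator.latticeRegion, Set.mem_setOf_eq, Finset.coe_image,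
    Set.mem_image, Finset.mem_coe, Finset.mem_range]
  constructor
  · intro h
    have h1 := h 1 0
    have h2 := h 0 1
    rw [e10, eGen_suppFn] at h1 h2
    simp only [Nat.mul_zero, Nat.mul_one, Nat.zero_mul, Nat.one_mul] at h1 h2
    refine ⟨p.1, by omega, ?_⟩
    have hp2 : p.2 = 0 := by omega
    rw [← hp2]
  · rintro ⟨i, hi, rfl⟩
    intro a' b'
    rw [e10, eGen_suppFn]
    have h0 : b' * i ≤ m * b' := by
      have him : i ≤ m := by omega
      calc b' * i ≤ b' * m := Nat.mul_le_mul_left _ him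
      _ = m * b' := Nat.mul_comm _ _
    simp only [Nat.mul_zero, Nat.mul_one, Nat.add_zero, Nat.sub_zero, Nat.zero_mul]
    omega

lemma e01_region (m : ℕ) :
    (e01 m).latticeRegion = ↑((Finset.range (m + 1)).image (fun j => ((0, j) : ℕ × ℕ))) := by
  ext p
  simp only [ConvexGenerator.latticeRegion, Set.mem_setOf_eq, Finset.coe_image,
    Set.mem_image, Finset.mem_coe, Finset.mem_range]
  constructor
  · intro h
    have h1 := h 1 0
    have h2 := h 0 1
    rw [e01, eGen_suppFn] at h1 h2
    simp only [Nat.mul_zero, Nat.mul_one, Nat.zero_mul, Nat.one_mul] at h1 h2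
    refine ⟨p.2, by omega, ?_⟩
    have hp1 : p.1 = 0 := by omega
    rw [← hp1]
  · rintro ⟨j, hj, rfl⟩
    intro a' b'
    rw [e01, eGen_suppFn]
    have h0 : a' * j ≤ a' * m := Nat.mul_le_mul_left _ (by omega)
    simp only [Nat.mul_zero, Nat.mul_one, Nat.zero_mul, Nat.zero_sub, Nat.add_zero]
    omega

lemma e10_LCount (m : ℕ) : (e10 m).LCount = m + 1 := by
  rw [ConvexGenerator.LCount, e10_region, Set.ncard_coe_finset,
    Finset.card_image_of_injective, Finset.card_range]
  intro i j hij; simpa using hij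

lemma e01_LCount (m : ℕ) : (e01 m).LCount = m + 1 := by
  rw [ConvexGenerator.LCount, e01_region, Set.ncard_coe_finset,
    Finset.card_image_of_injective, Finset.card_range]
  intro i j hij; simpa using hij

lemma e10_iIndex (m : ℕ) : (e10 m).iIndex = 2 * m := by
  rw [ConvexGenerator.iIndex, e10_LCount, e10, eGen_hCount]
  push_cast; ring

lemma e01_iIndex (m : ℕ) : (e01 m).iIndex = 2 * m := by
  rw [ConvexGenerator.iIndex, e01_LCount, e01, eGen_hCount]
  push_cast; ring

lemma cg_ext {Λ₁ Λ₂ : ConvexGenerator} (h1 : Λ₁.mult = Λ₂.mult)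
    (h2 : Λ₁.hLabel = Λ₂.hLabel) : Λ₁ = Λ₂ := by
  cases Λ₁; cases Λ₂
  cases h1; cases h2
  rfl

end Step1Aux

/-- **Step 1 of the proof of Theorem 1.8**: if `a, b ≥ 1`, `a > bc`, and
`Λ ≤_{P(a,1),P(bc,c)} Λ'` where `Λ' = e_{1,0}^d` or `Λ' = e_{0,1}^d` with `d > 0`, then
`d = 1` and `Λ = e_{1,0}`. -/
theorem polydisks_step1 (a b c : ℝ) (ha : 1 ≤ a) (hb : 1 ≤ b) (hc : 0 < c)
    (hbc : b * c < a) (d : ℕ) (hd : 0 < d)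
    (Λ Λ' : ConvexGenerator) (hΛ' : Λ' = e10 d ∨ Λ' = e01 d)
    (hle : genLE (rectOmega a 1) (rectOmega (b * c) c) Λ Λ') :
    d = 1 ∧ Λ = e10 1 := by
  obtain ⟨hI, hA, hm⟩ := hle
  have hbc0 : (0:ℝ) ≤ b * c := by nlinarith
  have hc0 : (0:ℝ) ≤ c := le_of_lt hc
  -- data of Λ'
  have hsum' : Λ'.xCoord + Λ'.yCoord + Λ'.mTotal = 2 * d := by
    rcases hΛ' with rfl | rfl
    · rw [e10, eGen_xCoord, eGen_yCoord, eGen_mTotal]; omega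
    · rw [e01, eGen_xCoord, eGen_yCoord, eGen_mTotal]; omega
  have hI' : Λ'.iIndex = 2 * d := by
    rcases hΛ' with rfl | rfl
    exacts [e10_iIndex d, e01_iIndex d]
  -- index relation for Λ
  rw [hI', ConvexGenerator.iIndex] at hI
  have hL := Λ.LCount_ge
  have key1 : 2 * Λ.xCoord + 2 * Λ.yCoord ≤ 2 * d + Λ.hCount := by omega
  -- inequality (iii)
  have hsumR : ((Λ'.xCoord : ℝ) + Λ'.yCoord + Λ'.mTotal) = 2 * d := by
    exact_mod_cast congrArg (Nat.cast : ℕ → ℝ) hsum'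
  have hmR : (2 * d : ℝ) - 1 ≤ Λ.xCoord + Λ.yCoord - Λ.hCount / 2 := by
    rw [← hsumR]; linarith
  have key2 : 4 * d + Λ.hCount ≤ 2 * Λ.xCoord + 2 * Λ.yCoord + 2 := by
    have h2 : (4 * d : ℝ) + Λ.hCount ≤ 2 * Λ.xCoord + 2 * Λ.yCoord + 2 := by linarith
    exact_mod_cast h2
  have hd1 : d = 1 := by omega
  subst hd1
  refine ⟨rfl, ?_⟩
  -- h = 0 and x + y = 1
  have hhx := Λ.hCount_le_xCoord
  have hhy := Λ.hCount_le_yCoord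
  have hh0 : Λ.hCount = 0 := by omega
  have hxy1 : Λ.xCoord + Λ.yCoord = 1 := by omega
  -- action bound
  have hActΛ : Λ.action (rectOmega a 1) = 1 * Λ.xCoord + a * Λ.yCoord :=
    action_rect Λ (by linarith) (by norm_num)
  have hbound : Λ.action (rectOmega a 1) ≤ b * c := by
    rcases hΛ' with rfl | rfl
    · have hact' : (e10 1).action (rectOmega (b * c) c) = c := by
        rw [e10, action_rect _ hbc0 hc0, eGen_xCoord, eGen_yCoord]
        norm_num
      rw [hact'] at hA
      nlinarith
    · have hact' : (e01 1).action (rectOmega (b * c) c) = b * c := by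
        rw [e01, action_rect _ hbc0 hc0, eGen_xCoord, eGen_yCoord]
        norm_num
      rw [hact'] at hA
      exact hA
  -- rule out (x, y) = (0, 1)
  have hy0 : Λ.yCoord = 0 := by
    by_contra hy0
    have hy1 : Λ.yCoord = 1 := by omega
    have hx0 : Λ.xCoord = 0 := by omega
    rw [hActΛ, hx0, hy1] at hbound
    push_cast at hbound
    linarith
  have hx1 : Λ.xCoord = 1 := by omega
  -- identify Λ with e10 1
  have hsupp : ∀ d' ∈ Λ.supp, d' = ((1, 0) : ℕ × ℕ) := by
    intro d' hd'
    have hm0 : Λ.mult d' ≠ 0 := ConvexGenerator.mem_supp.mp hd'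
    have hsum0 : ∑ p ∈ Λ.supp, Λ.mult p * p.2 = 0 := by
      rw [← Λ.yCoord_eq, hy0]
    have hz : Λ.mult d' * d'.2 = 0 := by
      have := (Finset.sum_eq_zero_iff).mp hsum0 d' hd'
      exact this
    have hd2 : d'.2 = 0 := by
      rcases Nat.mul_eq_zero.mp hz with h | h
      · exact absurd h hm0
      · exact h
    have hcop := Λ.coprime_of_mem d' hm0
    rw [Nat.Coprime, hd2, Nat.gcd_zero_right] at hcop
    rcases d' with ⟨d1, d2⟩
    simp only at hd2 hcop
    rw [hd2, hcop]
  have hsuppsub : Λ.supp ⊆ {((1, 0) : ℕ × ℕ)} := by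
    intro d' hd'
    rw [Finset.mem_singleton]
    exact hsupp d' hd'
  have hmult10 : Λ.mult (1, 0) = 1 := by
    have hx' : ∑ p ∈ Λ.supp, Λ.mult p * p.1 = 1 := by rw [← Λ.xCoord_eq, hx1]
    have heq : ∑ p ∈ ({((1, 0) : ℕ × ℕ)} : Finset (ℕ × ℕ)), Λ.mult p * p.1
        = ∑ p ∈ Λ.supp, Λ.mult p * p.1 := by
      apply (Finset.sum_subset hsuppsub _).symm
      intro p _ hp
      have : Λ.mult p = 0 := by
        by_contra hcon
        exact hp (ConvexGenerator.mem_supp.mpr hcon)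
      rw [this, Nat.zero_mul]
    rw [hx', Finset.sum_singleton] at heq
    simpa using heq
  have hmultz : ∀ d' : ℕ × ℕ, d' ≠ (1, 0) → Λ.mult d' = 0 := by
    intro d' hne
    by_contra hcon
    exact hne (hsupp d' (ConvexGenerator.mem_supp.mpr hcon))
  apply cg_ext
  · funext d'
    by_cases hcase : d' = ((1, 0) : ℕ × ℕ)
    · rw [hcase, hmult10]; simp [e10, eGen]
    · rw [hmultz d' hcase]; simp [e10, eGen, hcase]
  · funext d'
    have hfalse : Λ.hLabel d' = false := by
      by_contra hcon
      rw [Bool.not_eq_false] at hcon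
      have hm0 := Λ.mult_pos_of_h d' hcon
      have := hsupp d' (ConvexGenerator.mem_supp.mpr hm0)
      rw [this] at hcon
      rw [Λ.h_ne_horiz] at hcon
      exact Bool.false_ne_true hcon
    rw [hfalse]
    rfl
end

section
/- Let a, b ≥ 1 and c > 0 with a > bc and a ≤ 2b. If d and k are positive integers and Λ is a convex generator with Λ ≤_{P(a,1),P(bc,c)} e_{1,0}^d e_{0,1}^k (the convex generator with a horizontal edge of multiplicity d and a vertical edge of multiplicity k, both labeled 'e'), then y(Λ) < k. -/
open Real Set

lemma rect_sSup (u v A B : ℝ) (hu : 0 ≤ u) (hv : 0 ≤ v) (hA : 0 ≤ A) (hB : 0 ≤ B) :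
    sSup ((fun p : ℝ × ℝ => u * p.1 + v * p.2) '' rectOmega A B) = u * A + v * B := by
  apply IsGreatest.csSup_eq
  constructor
  · exact ⟨(A, B), ⟨hA, le_refl A, hB, le_refl B⟩, rfl⟩
  · rintro x ⟨p, ⟨h1, h2, h3, h4⟩, rfl⟩
    have := mul_le_mul_of_nonneg_left h2 hu
    have := mul_le_mul_of_nonneg_left h4 hv
    dsimp only
    linarith

lemma cg_action_rect (Λ : ConvexGenerator) (A B : ℝ) (hA : 0 ≤ A) (hB : 0 ≤ B) :
    Λ.action (rectOmega A B) = A * (Λ.yCoord : ℝ) + B * (Λ.xCoord : ℝ) := by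
  classical
  set s : Finset (ℕ × ℕ) := Λ.finite_support.toFinset with hs
  have hmem : ∀ p : ℕ × ℕ, Λ.mult p ≠ 0 → p ∈ s := fun p hp =>
    Λ.finite_support.mem_toFinset.2 hp
  have h1 : Λ.action (rectOmega A B) =
      ∑ p ∈ s, (Λ.mult p : ℝ) * ((p.2 : ℝ) * A + (p.1 : ℝ) * B) := by
    rw [ConvexGenerator.action,
      finsum_eq_sum_of_support_subset _ (s := s) (fun p hp => by
        have : Λ.mult p ≠ 0 := by
          intro h0
          apply hp
          simp [Function.mem_support, h0]
        exact hmem p this)]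
    refine Finset.sum_congr rfl fun p _ => ?_
    rw [rect_sSup _ _ _ _ (by positivity) (by positivity) hA hB]
  have hx : (Λ.xCoord : ℝ) = ∑ p ∈ s, (Λ.mult p : ℝ) * (p.1 : ℝ) := by
    rw [ConvexGenerator.xCoord,
      finsum_eq_sum_of_support_subset _ (s := s) (fun p hp => by
        have : Λ.mult p ≠ 0 := by
          intro h0; apply hp; simp [Function.mem_support, h0]
        exact hmem p this)]
    push_cast
    rfl
  have hy : (Λ.yCoord : ℝ) = ∑ p ∈ s, (Λ.mult p : ℝ) * (p.2 : ℝ) := by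
    rw [ConvexGenerator.yCoord,
      finsum_eq_sum_of_support_subset _ (s := s) (fun p hp => by
        have : Λ.mult p ≠ 0 := by
          intro h0; apply hp; simp [Function.mem_support, h0]
        exact hmem p this)]
    push_cast
    rfl
  rw [h1, hx, hy, Finset.mul_sum, Finset.mul_sum, ← Finset.sum_add_distrib]
  exact Finset.sum_congr rfl fun p _ => by ring

lemma e10e01_mult (d k : ℕ) (p : ℕ × ℕ) :
    (mulCG (e10 d) (e01 k)).mult p =
      (if p = (1, 0) then d else 0) + (if p = (0, 1) then k else 0) := rfl

lemma e10e01_support (d k : ℕ) :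
    Function.support (mulCG (e10 d) (e01 k)).mult ⊆
      (({(1, 0), (0, 1)} : Finset (ℕ × ℕ)) : Set (ℕ × ℕ)) := by
  intro p hp
  simp only [Function.mem_support, e10e01_mult] at hp
  by_contra h
  simp only [Finset.coe_insert, Finset.coe_singleton, Set.mem_insert_iff,
    Set.mem_singleton_iff] at h
  push_neg at h
  simp [h.1, h.2] at hp

lemma e10e01_xCoord (d k : ℕ) : (mulCG (e10 d) (e01 k)).xCoord = d := by
  rw [ConvexGenerator.xCoord,
    finsum_eq_sum_of_support_subset _ (s := {(1, 0), (0, 1)}) (fun p hp => by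
      have : (mulCG (e10 d) (e01 k)).mult p ≠ 0 := by
        intro h0; apply hp; simp [Function.mem_support, h0]
      exact e10e01_support d k this)]
  rw [Finset.sum_pair (by decide : ((1, 0) : ℕ × ℕ) ≠ (0, 1))]
  simp [e10e01_mult]

lemma e10e01_yCoord (d k : ℕ) : (mulCG (e10 d) (e01 k)).yCoord = k := by
  rw [ConvexGenerator.yCoord,
    finsum_eq_sum_of_support_subset _ (s := {(1, 0), (0, 1)}) (fun p hp => by
      have : (mulCG (e10 d) (e01 k)).mult p ≠ 0 := by
        intro h0; apply hp; simp [Function.mem_support, h0]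
      exact e10e01_support d k this)]
  rw [Finset.sum_pair (by decide : ((1, 0) : ℕ × ℕ) ≠ (0, 1))]
  simp [e10e01_mult]

lemma e10e01_mTotal (d k : ℕ) : (mulCG (e10 d) (e01 k)).mTotal = d + k := by
  rw [ConvexGenerator.mTotal,
    finsum_eq_sum_of_support_subset _ (s := {(1, 0), (0, 1)}) (fun p hp =>
      e10e01_support d k hp)]
  rw [Finset.sum_pair (by decide : ((1, 0) : ℕ × ℕ) ≠ (0, 1))]
  simp [e10e01_mult]

/-- **Step 2 of the proof of Theorem 1.8**: if `a, b ≥ 1`, `a > bc`, `a ≤ 2b`, and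
`Λ ≤_{P(a,1),P(bc,c)} e_{1,0}^d e_{0,1}^k` with `d, k > 0`, then `y(Λ) < k`. -/
theorem polydisks_step2 (a b c : ℝ) (ha : 1 ≤ a) (hb : 1 ≤ b) (hc : 0 < c)
    (hbc : b * c < a) (hab : a ≤ 2 * b) (d k : ℕ) (hd : 0 < d) (hk : 0 < k)
    (Λ : ConvexGenerator)
    (hle : genLE (rectOmega a 1) (rectOmega (b * c) c) Λ (mulCG (e10 d) (e01 k))) :
    Λ.yCoord < k := by
  obtain ⟨hI, hA, hiii⟩ := hle
  have hbc0 : (0:ℝ) ≤ b * c := by positivity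
  rw [cg_action_rect Λ a 1 (by linarith) (by norm_num),
      cg_action_rect _ (b * c) c hbc0 (le_of_lt hc),
      e10e01_xCoord, e10e01_yCoord] at hA
  rw [e10e01_xCoord, e10e01_yCoord, e10e01_mTotal] at hiii
  by_contra hcon
  push_neg at hcon
  have hy : (k : ℝ) ≤ (Λ.yCoord : ℝ) := by exact_mod_cast hcon
  have hx0 : (0:ℝ) ≤ (Λ.xCoord : ℝ) := Nat.cast_nonneg _
  have hh0 : (0:ℝ) ≤ (Λ.hCount : ℝ) := Nat.cast_nonneg _
  have hd1 : (1:ℝ) ≤ (d : ℝ) := by exact_mod_cast hd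
  have hk1 : (1:ℝ) ≤ (k : ℝ) := by exact_mod_cast hk
  have hc2 : c < 2 := by nlinarith
  push_cast at hA hiii
  nlinarith [mul_lt_mul_of_pos_right hbc (lt_of_lt_of_le zero_lt_one hk1),
    mul_pos (sub_pos.mpr hbc) (lt_of_lt_of_le zero_lt_one hk1),
    mul_pos (sub_pos.mpr hc2) (lt_of_lt_of_le zero_lt_one hd1),
    mul_le_mul_of_nonneg_left hy (by linarith : (0:ℝ) ≤ a - 1)]
end

section
/- For all real numbers a, b > 0 and every nonnegative integer k, the minimum of b·x(Λ) + a·y(Λ) over all convex integral paths Λ with L(Λ) = k+1 equals the minimum of a·m + b·n over all pairs of nonnegative integers (m,n) with (m+1)(n+1) ≥ k+1. (Both minima equal the k-th ECH capacity of the polydisk P(a,b).) -/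
open Real Set

section AuxProof
open ConvexGenerator

private lemma aux_supp_ite (c : ℕ × ℕ) (v : ℕ) (g : ℕ × ℕ → ℕ) :
    (Function.support fun d => (if d = c then v else 0) * g d).Finite := by
  apply Set.Finite.subset (Set.finite_singleton c)
  intro d hd
  simp only [Function.mem_support] at hd
  by_contra h
  simp only [Set.mem_singleton_iff] at h
  simp [h] at hd

private lemma aux_finsum_ite (c : ℕ × ℕ) (v : ℕ) (g : ℕ × ℕ → ℕ) :
    ∑ᶠ d, (if d = c then v else 0) * g d = v * g c := by
  rw [finsum_eq_single _ c (by intro d hd; simp [hd])]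
  simp

/-- Rectangle generator. -/
private def rectGen (n m : ℕ) : ConvexGenerator := mulCG (e10 n) (e01 m)

private lemma rect_finsum (n m : ℕ) (g : ℕ × ℕ → ℕ) :
    ∑ᶠ d, (rectGen n m).mult d * g d = n * g (1, 0) + m * g (0, 1) := by
  have h : ∀ d, (rectGen n m).mult d * g d =
      (if d = ((1 : ℕ), (0 : ℕ)) then n else 0) * g d +
      (if d = ((0 : ℕ), (1 : ℕ)) then m else 0) * g d := by
    intro d
    simp only [rectGen, mulCG, e10, e01, eGen, add_mul]
  rw [finsum_congr h,
    finsum_add_distrib (aux_supp_ite _ _ _) (aux_supp_ite _ _ _),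
    aux_finsum_ite, aux_finsum_ite]

private lemma rect_allE (n m : ℕ) : (rectGen n m).allE := by
  intro d
  simp [rectGen, mulCG, e10, e01, eGen, ConvexGenerator.allE]

private lemma rect_x (n m : ℕ) : (rectGen n m).xCoord = n := by
  rw [ConvexGenerator.xCoord, rect_finsum]; simp

private lemma rect_y (n m : ℕ) : (rectGen n m).yCoord = m := by
  rw [ConvexGenerator.yCoord, rect_finsum]; simp

private lemma rect_supp (n m a' b' : ℕ) :
    (rectGen n m).suppFn a' b' = a' * m + n * b' := by
  rw [ConvexGenerator.suppFn, rect_y, rect_finsum]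
  simp

private lemma rect_region (n m : ℕ) :
    (rectGen n m).latticeRegion =
      ↑(Finset.range (n + 1) ×ˢ Finset.range (m + 1)) := by
  ext p
  simp only [ConvexGenerator.latticeRegion, Set.mem_setOf_eq, Finset.coe_product,
    Set.mem_prod, Finset.mem_coe, Finset.mem_range, Nat.lt_succ_iff]
  constructor
  · intro h
    constructor
    · have := h 0 1; rw [rect_supp] at this; omega
    · have := h 1 0; rw [rect_supp] at this; omega
  · rintro ⟨h1, h2⟩ a' b'
    rw [rect_supp]
    have hA := Nat.mul_le_mul_left b' h1
    have hB := Nat.mul_le_mul_left a' h2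
    have hC : n * b' = b' * n := Nat.mul_comm _ _
    omega

private lemma rect_L (n m : ℕ) : (rectGen n m).LCount = (n + 1) * (m + 1) := by
  rw [ConvexGenerator.LCount, rect_region, Set.ncard_coe_finset]
  simp

/-- Cut-corner generator: rectangle `n × m` with `r` points cut from the top right. -/
private def cutGen (n m r : ℕ) : ConvexGenerator :=
  mulCG (e10 (n - r)) (mulCG (eGen r 1 (Nat.coprime_one_right r) 1) (e01 (m - 1)))

private lemma cut_finsum (n m r : ℕ) (g : ℕ × ℕ → ℕ) :
    ∑ᶠ d, (cutGen n m r).mult d * g d =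
      (n - r) * g (1, 0) + (1 * g (r, 1) + (m - 1) * g (0, 1)) := by
  have h : ∀ d, (cutGen n m r).mult d * g d =
      (if d = ((1 : ℕ), (0 : ℕ)) then n - r else 0) * g d +
      ((if d = (r, (1 : ℕ)) then 1 else 0) * g d +
       (if d = ((0 : ℕ), (1 : ℕ)) then m - 1 else 0) * g d) := by
    intro d
    simp only [cutGen, mulCG, e10, e01, eGen, add_mul]
  rw [finsum_congr h,
    finsum_add_distrib (aux_supp_ite _ _ _)
      (Set.Finite.subset ((Set.finite_singleton (r, 1)).union
        (Set.finite_singleton ((0 : ℕ), (1 : ℕ)))) ?_),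
    finsum_add_distrib (aux_supp_ite _ _ _) (aux_supp_ite _ _ _),
    aux_finsum_ite, aux_finsum_ite, aux_finsum_ite]
  intro d hd
  simp only [Function.mem_support] at hd
  by_contra h'
  simp only [Set.mem_union, Set.mem_singleton_iff, not_or] at h'
  simp [h'.1, h'.2] at hd

private lemma cut_allE (n m r : ℕ) : (cutGen n m r).allE := by
  intro d
  simp [cutGen, mulCG, e10, e01, eGen, ConvexGenerator.allE]

private lemma cut_x (n m r : ℕ) (hrn : r ≤ n) : (cutGen n m r).xCoord = n := by
  rw [ConvexGenerator.xCoord, cut_finsum]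
  simp; omega

private lemma cut_y (n m r : ℕ) (hm : 1 ≤ m) : (cutGen n m r).yCoord = m := by
  rw [ConvexGenerator.yCoord, cut_finsum]
  simp; omega

private lemma cut_supp (n m r a' b' : ℕ) (hm : 1 ≤ m) :
    (cutGen n m r).suppFn a' b' = a' * m + (n - r) * b' + (b' * r - a') := by
  rw [ConvexGenerator.suppFn, cut_y n m r hm, cut_finsum]
  simp; omega

private lemma cut_region (n m r : ℕ) (hm : 1 ≤ m) (hrn : r ≤ n) :
    (cutGen n m r).latticeRegion =
      ↑((Finset.range (n + 1) ×ˢ Finset.range m) ∪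
        (Finset.range (n - r + 1) ×ˢ {m})) := by
  ext p
  simp only [ConvexGenerator.latticeRegion, Set.mem_setOf_eq, Finset.coe_union,
    Set.mem_union, Finset.coe_product, Set.mem_prod, Finset.mem_coe,
    Finset.mem_range, Finset.mem_singleton, Nat.lt_succ_iff]
  constructor
  · intro h
    have h01 := h 0 1; rw [cut_supp n m r 0 1 hm] at h01
    have h10 := h 1 0; rw [cut_supp n m r 1 0 hm] at h10
    have hr1 := h r 1; rw [cut_supp n m r r 1 hm] at hr1
    simp only [one_mul, zero_mul, mul_zero, mul_one, add_zero, zero_add] at h01 h10 hr1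
    rcases eq_or_lt_of_le (by omega : p.2 ≤ m) with he | hlt
    · right
      refine ⟨?_, he⟩
      rw [he] at hr1
      have hrm : r * p.2 = p.2 * r := Nat.mul_comm _ _
      omega
    · left; omega
  · intro h a' b'
    rw [cut_supp n m r a' b' hm]
    rcases le_or_gt a' (b' * r) with hs | hs
    · -- b' * r - a' is genuine
      rcases h with ⟨h1, h2⟩ | ⟨h1, h2⟩
      · have hA : b' * p.1 ≤ b' * n := Nat.mul_le_mul_left b' h1
        have hB : a' * p.2 + a' ≤ a' * m := by
          calc a' * p.2 + a' = a' * (p.2 + 1) := by ring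
          _ ≤ a' * m := Nat.mul_le_mul_left a' (by omega)
        have hC : b' * n = b' * (n - r) + b' * r := by
          rw [← Nat.mul_add]; congr 1; omega
        have hD : (n - r) * b' = b' * (n - r) := Nat.mul_comm _ _
        omega
      · have hA : b' * p.1 ≤ b' * (n - r) := Nat.mul_le_mul_left b' h1
        have hB : a' * p.2 = a' * m := by rw [h2]
        have hD : (n - r) * b' = b' * (n - r) := Nat.mul_comm _ _
        omega
    · -- b' * r - a' = 0
      have hz : b' * r - a' = 0 := by omega
      rw [hz, add_zero]
      rcases h with ⟨h1, h2⟩ | ⟨h1, h2⟩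
      · have hA : b' * p.1 ≤ b' * n := Nat.mul_le_mul_left b' h1
        have hB : a' * p.2 + a' ≤ a' * m := by
          calc a' * p.2 + a' = a' * (p.2 + 1) := by ring
          _ ≤ a' * m := Nat.mul_le_mul_left a' (by omega)
        have hC : b' * n = b' * (n - r) + b' * r := by
          rw [← Nat.mul_add]; congr 1; omega
        have hD : (n - r) * b' = b' * (n - r) := Nat.mul_comm _ _
        omega
      · have hA : b' * p.1 ≤ b' * (n - r) := Nat.mul_le_mul_left b' h1
        have hB : a' * p.2 = a' * m := by rw [h2]
        have hD : (n - r) * b' = b' * (n - r) := Nat.mul_comm _ _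
        omega

private lemma cut_L (n m r : ℕ) (hm : 1 ≤ m) (hrn : r ≤ n) :
    (cutGen n m r).LCount = (n + 1) * m + (n - r + 1) := by
  rw [ConvexGenerator.LCount, cut_region n m r hm hrn, Set.ncard_coe_finset]
  rw [Finset.card_union_of_disjoint]
  · simp
  · rw [Finset.disjoint_left]
    rintro p hp hq
    simp only [Finset.mem_product, Finset.mem_range, Finset.mem_singleton] at hp hq
    omega

private lemma supp_zero_one (Λ : ConvexGenerator) : Λ.suppFn 0 1 = Λ.xCoord := by
  rw [ConvexGenerator.suppFn, ConvexGenerator.xCoord]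
  simp

private lemma supp_one_zero (Λ : ConvexGenerator) : Λ.suppFn 1 0 = Λ.yCoord := by
  rw [ConvexGenerator.suppFn]
  have : ∀ d : ℕ × ℕ, Λ.mult d * (0 * d.1 - 1 * d.2) = 0 := by
    intro d; simp
  rw [finsum_congr this]
  simp

private lemma LCount_le_rect (Λ : ConvexGenerator) :
    Λ.LCount ≤ (Λ.xCoord + 1) * (Λ.yCoord + 1) := by
  have hsub : Λ.latticeRegion ⊆
      ↑(Finset.range (Λ.xCoord + 1) ×ˢ Finset.range (Λ.yCoord + 1)) := by
    intro p hp
    have h1 := hp 0 1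
    have h2 := hp 1 0
    rw [supp_zero_one] at h1
    rw [supp_one_zero] at h2
    simp only [Finset.coe_product, Set.mem_prod, Finset.mem_coe, Finset.mem_range,
      Nat.lt_succ_iff]
    omega
  calc Λ.LCount ≤ (Finset.range (Λ.xCoord + 1) ×ˢ Finset.range (Λ.yCoord + 1)).card := by
        rw [← Set.ncard_coe_finset]
        exact Set.ncard_le_ncard hsub (Finset.finite_toSet _)
  _ = (Λ.xCoord + 1) * (Λ.yCoord + 1) := by simp

end AuxProof
/-- **Proposition 3.2 for polydisks**: for `a, b > 0` and `k ≥ 0`, the minimum of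
`b x(Λ) + a y(Λ)` over convex integral paths `Λ` with `L(Λ) = k + 1` equals the minimum of
`a m + b n` over pairs of nonnegative integers `(m,n)` with `(m+1)(n+1) ≥ k+1`; both are
the `k`-th ECH capacity of `P(a,b)`.  (Convex integral paths are encoded as convex
generators with all edges labeled `e`.) -/
theorem ech_capacity_polydisk (a b : ℝ) (ha : 0 < a) (hb : 0 < b) (k : ℕ) :
    ∃ v : ℝ,
      IsLeast {w : ℝ | ∃ Λ : ConvexGenerator, Λ.allE ∧ Λ.LCount = k + 1 ∧
        w = b * (Λ.xCoord : ℝ) + a * (Λ.yCoord : ℝ)} v ∧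
      IsLeast {w : ℝ | ∃ m n : ℕ, k + 1 ≤ (m + 1) * (n + 1) ∧
        w = a * (m : ℝ) + b * (n : ℝ)} v := by
  classical
  set T : Finset (ℕ × ℕ) :=
    (Finset.range (k + 1) ×ˢ Finset.range (k + 1)).filter
      (fun p => k + 1 ≤ (p.1 + 1) * (p.2 + 1)) with hT
  have hTne : T.Nonempty := ⟨(k, 0), by simp [hT]⟩
  obtain ⟨⟨m₀, n₀⟩, hp₀T, hp₀min⟩ :=
    T.exists_min_image (fun p => a * (p.1 : ℝ) + b * (p.2 : ℝ)) hTne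
  simp only [hT, Finset.mem_filter, Finset.mem_product, Finset.mem_range] at hp₀T
  set v : ℝ := a * (m₀ : ℝ) + b * (n₀ : ℝ) with hv
  have hle2 : IsLeast {w : ℝ | ∃ m n : ℕ, k + 1 ≤ (m + 1) * (n + 1) ∧
      w = a * (m : ℝ) + b * (n : ℝ)} v := by
    constructor
    · exact ⟨m₀, n₀, hp₀T.2, rfl⟩
    · rintro w ⟨m, n, hmn, rfl⟩
      have hmem : (min m k, min n k) ∈ T := by
        simp only [hT, Finset.mem_filter, Finset.mem_product, Finset.mem_range]
        refine ⟨⟨by omega, by omega⟩, ?_⟩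
        rcases le_or_gt k m with h | h
        · have h1 : min m k = k := min_eq_right h
          have : (k + 1) * 1 ≤ (k + 1) * (min n k + 1) :=
            Nat.mul_le_mul_left _ (by omega)
          rw [h1]; omega
        · rcases le_or_gt k n with h' | h'
          · have h1 : min n k = k := min_eq_right h'
            have : 1 * (k + 1) ≤ (min m k + 1) * (k + 1) :=
              Nat.mul_le_mul_right _ (by omega)
            rw [h1]; omega
          · rw [min_eq_left (by omega), min_eq_left (by omega)]; exact hmn
      have hle := hp₀min _ hmem
      have h1 : a * ((min m k : ℕ) : ℝ) ≤ a * (m : ℝ) := by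
        apply mul_le_mul_of_nonneg_left _ ha.le
        exact_mod_cast Nat.min_le_left m k
      have h2 : b * ((min n k : ℕ) : ℝ) ≤ b * (n : ℝ) := by
        apply mul_le_mul_of_nonneg_left _ hb.le
        exact_mod_cast Nat.min_le_left n k
      simp only at hle
      linarith
  have ht1 : m₀ * (n₀ + 1) ≤ k := by
    by_contra hcon
    push_neg at hcon
    have hm₀ : 1 ≤ m₀ := by
      rcases Nat.eq_zero_or_pos m₀ with h | h
      · rw [h] at hcon; simp at hcon
      · exact h
    have hmem2 : a * (((m₀ - 1 : ℕ)) : ℝ) + b * (n₀ : ℝ) ∈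
        {w : ℝ | ∃ m n : ℕ, k + 1 ≤ (m + 1) * (n + 1) ∧
          w = a * (m : ℝ) + b * (n : ℝ)} := by
      refine ⟨m₀ - 1, n₀, ?_, rfl⟩
      rw [show m₀ - 1 + 1 = m₀ by omega]; exact hcon
    have hge := hle2.2 hmem2
    rw [Nat.cast_sub hm₀] at hge
    push_cast at hge
    rw [hv] at hge
    nlinarith
  have ht2 : n₀ * (m₀ + 1) ≤ k := by
    by_contra hcon
    push_neg at hcon
    have hn₀ : 1 ≤ n₀ := by
      rcases Nat.eq_zero_or_pos n₀ with h | h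
      · rw [h] at hcon; simp at hcon
      · exact h
    have hmem2 : a * (m₀ : ℝ) + b * (((n₀ - 1 : ℕ)) : ℝ) ∈
        {w : ℝ | ∃ m n : ℕ, k + 1 ≤ (m + 1) * (n + 1) ∧
          w = a * (m : ℝ) + b * (n : ℝ)} := by
      refine ⟨m₀, n₀ - 1, ?_, rfl⟩
      have : (m₀ + 1) * (n₀ - 1 + 1) = (n₀ - 1 + 1) * (m₀ + 1) := Nat.mul_comm _ _
      rw [show n₀ - 1 + 1 = n₀ by omega] at this ⊢
      rw [this]; exact hcon
    have hge := hle2.2 hmem2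
    rw [Nat.cast_sub hn₀] at hge
    push_cast at hge
    rw [hv] at hge
    nlinarith
  set r : ℕ := (m₀ + 1) * (n₀ + 1) - (k + 1) with hrdef
  have hrk : k + 1 + r = (m₀ + 1) * (n₀ + 1) := by
    have := hp₀T.2; omega
  have hrm : r ≤ m₀ := by
    have hexp : (m₀ + 1) * (n₀ + 1) = n₀ * (m₀ + 1) + (m₀ + 1) := by ring
    omega
  have hrn : r ≤ n₀ := by
    have hexp : (m₀ + 1) * (n₀ + 1) = m₀ * (n₀ + 1) + (n₀ + 1) := by ring
    omega
  refine ⟨v, ⟨?_, ?_⟩, hle2⟩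
  · -- membership in the first set
    rcases Nat.eq_zero_or_pos m₀ with hm | hm
    · have hr0 : r = 0 := by omega
      have hn : n₀ = k := by
        have hone : (m₀ + 1) * (n₀ + 1) = n₀ + 1 := by rw [hm]; ring
        omega
      refine ⟨rectGen n₀ 0, rect_allE _ _, ?_, ?_⟩
      · rw [rect_L]
        omega
      · rw [rect_x, rect_y, hv, hm]
        push_cast
        ring
    · refine ⟨cutGen n₀ m₀ r, cut_allE _ _ _, ?_, ?_⟩
      · rw [cut_L n₀ m₀ r hm hrn]
        have hexp : (m₀ + 1) * (n₀ + 1) = (n₀ + 1) * m₀ + (n₀ + 1) := by ring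
        omega
      · rw [cut_x _ _ _ hrn, cut_y _ _ _ hm, hv]
        ring
  · -- lower bound for the first set
    rintro w ⟨Λ, _, hL, rfl⟩
    have h1 : k + 1 ≤ (Λ.xCoord + 1) * (Λ.yCoord + 1) := hL ▸ LCount_le_rect Λ
    have h2 := hle2.2 ⟨Λ.yCoord, Λ.xCoord, by rw [Nat.mul_comm]; exact h1, rfl⟩
    linarith
end
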